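/- Assume the biadmissible family {U(ρ,τ) : ρ, τ ∈ 𝒯} is URCE. Then A̅ ≥ V̲, i.e. inf_{𝛒 ∈ 𝕋^i} sup_{τ ∈ 𝒯} E[U(𝛒(τ),τ)] ≥ sup_{τ ∈ 𝒯} inf_{ρ ∈ 𝒯} E[V¹(τ)·1_{τ ≤ ρ} + V²(ρ)·1_{τ > ρ}]. -/

import Mathlib

open MeasureTheory Filter Set

namespace OSG

variable {Ω : Type*} {m : MeasurableSpace Ω}

/-- The set of `𝔽`-stopping times with values in `[0, T]`. -/
def ST (𝓕 : Filtration ℝ m) (T : ℝ) : Set (Ω → ℝ) :=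
  {σ | IsStoppingTime 𝓕 (fun ω => (σ ω : WithTop ℝ)) ∧ ∀ ω, σ ω ∈ Set.Icc (0 : ℝ) T}

/-- `𝒯_{σ+}` : stopping times strictly after `σ` (equal to `T` where `σ = T`). -/
def STplus (𝓕 : Filtration ℝ m) (μ : Measure Ω) (T : ℝ) (σ : Ω → ℝ) : Set (Ω → ℝ) :=
  {ρ | ρ ∈ ST 𝓕 T ∧ ∀ᵐ ω ∂μ, (σ ω < T → σ ω < ρ ω) ∧ (σ ω = T → ρ ω = T)}

/-- The filtration satisfies the usual conditions: completeness and right continuity on `[0,T)`. -/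
def UsualConditions (𝓕 : Filtration ℝ m) (μ : Measure Ω) (T : ℝ) : Prop :=
  (∀ s : Set Ω, μ s = 0 → MeasurableSet[𝓕 0] s) ∧
  (∀ t : ℝ, t ∈ Set.Ico (0 : ℝ) T → (𝓕 t : MeasurableSpace Ω) = ⨅ u ∈ Set.Ioc t T, 𝓕 u)

/-- Stopping strategies of Type I. -/
def TypeI (𝓕 : Filtration ℝ m) (μ : Measure Ω) (T : ℝ) (r : (Ω → ℝ) → Ω → ℝ) : Prop :=
  (∀ σ ∈ ST 𝓕 T, r σ ∈ ST 𝓕 T) ∧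
  ∀ σ₁ ∈ ST 𝓕 T, ∀ σ₂ ∈ ST 𝓕 T, ∀ᵐ ω ∂μ,
    (r σ₁ ω = r σ₂ ω ∧ r σ₁ ω ≤ min (σ₁ ω) (σ₂ ω)) ∨
    min (σ₁ ω) (σ₂ ω) < min (r σ₁ ω) (r σ₂ ω)

/-- Stopping strategies of Type II. -/
def TypeII (𝓕 : Filtration ℝ m) (μ : Measure Ω) (T : ℝ) (r : (Ω → ℝ) → Ω → ℝ) : Prop :=
  (∀ σ ∈ ST 𝓕 T, r σ ∈ ST 𝓕 T) ∧
  ∀ σ₁ ∈ ST 𝓕 T, ∀ σ₂ ∈ ST 𝓕 T, ∀ᵐ ω ∂μ,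
    (r σ₁ ω = r σ₂ ω ∧ r σ₁ ω < min (σ₁ ω) (σ₂ ω)) ∨
    min (σ₁ ω) (σ₂ ω) ≤ min (r σ₁ ω) (r σ₂ ω)

/-- Biadmissible family `{U(ρ,τ)}`. -/
def Biadmissible (𝓕 : Filtration ℝ m) (μ : Measure Ω) (T : ℝ)
    (U : (Ω → ℝ) → (Ω → ℝ) → Ω → ℝ) : Prop :=
  (∃ C : ℝ, ∀ ρ ∈ ST 𝓕 T, ∀ τ ∈ ST 𝓕 T, ∀ᵐ ω ∂μ, |U ρ τ ω| ≤ C) ∧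
  (∀ ρ τ : Ω → ℝ, ∀ (hρ : ρ ∈ ST 𝓕 T) (hτ : τ ∈ ST 𝓕 T),
    Measurable[(hρ.1.max hτ.1).measurableSpace] (U ρ τ)) ∧
  (∀ ρ₁ ∈ ST 𝓕 T, ∀ ρ₂ ∈ ST 𝓕 T, ∀ τ₁ ∈ ST 𝓕 T, ∀ τ₂ ∈ ST 𝓕 T,
    ∀ᵐ ω ∂μ, ρ₁ ω = ρ₂ ω → τ₁ ω = τ₂ ω → U ρ₁ τ₁ ω = U ρ₂ τ₂ ω)

/-- Uniform right continuity in expectation along stopping times. -/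
def URCE (𝓕 : Filtration ℝ m) (μ : Measure Ω) (T : ℝ)
    (U : (Ω → ℝ) → (Ω → ℝ) → Ω → ℝ) : Prop :=
  ∀ ρ ∈ ST 𝓕 T, ∀ τ ∈ ST 𝓕 T, ∀ ρs τs : ℕ → Ω → ℝ,
    (∀ n, ρs n ∈ ST 𝓕 T) → (∀ n, τs n ∈ ST 𝓕 T) →
    (∀ᵐ ω ∂μ, Antitone (fun n => ρs n ω) ∧
      Tendsto (fun n => ρs n ω) atTop (nhds (ρ ω))) →
    (∀ᵐ ω ∂μ, Antitone (fun n => τs n ω) ∧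
      Tendsto (fun n => τs n ω) atTop (nhds (τ ω))) →
    Tendsto (fun n => ⨆ ρ' : ST 𝓕 T,
        |(∫ ω, U ρ' τ ω ∂μ) - ∫ ω, U ρ' (τs n) ω ∂μ|) atTop (nhds 0) ∧
    Tendsto (fun n => ⨆ τ' : ST 𝓕 T,
        |(∫ ω, U ρ τ' ω ∂μ) - ∫ ω, U (ρs n) τ' ω ∂μ|) atTop (nhds 0)

/-- `V¹(τ) = essinf_{ρ ∈ 𝒯_τ} E[U(ρ,τ) | ℱ_τ]`, characterized by its defining properties. -/
def IsV1 (𝓕 : Filtration ℝ m) (μ : Measure Ω) (T : ℝ)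
    (U : (Ω → ℝ) → (Ω → ℝ) → Ω → ℝ) (V1 : (Ω → ℝ) → Ω → ℝ) : Prop :=
  ∀ τ : Ω → ℝ, ∀ hτ : τ ∈ ST 𝓕 T,
    StronglyMeasurable[hτ.1.measurableSpace] (V1 τ) ∧
    (∀ ρ ∈ ST 𝓕 T, (∀ᵐ ω ∂μ, τ ω ≤ ρ ω) →
      V1 τ ≤ᵐ[μ] μ[U ρ τ | hτ.1.measurableSpace]) ∧
    (∀ Z : Ω → ℝ,
      (∀ ρ ∈ ST 𝓕 T, (∀ᵐ ω ∂μ, τ ω ≤ ρ ω) →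
        Z ≤ᵐ[μ] μ[U ρ τ | hτ.1.measurableSpace]) →
      Z ≤ᵐ[μ] V1 τ)

/-- `V²(ρ) = esssup_{τ ∈ 𝒯_ρ} E[U(ρ,τ) | ℱ_ρ]`, characterized by its defining properties. -/
def IsV2 (𝓕 : Filtration ℝ m) (μ : Measure Ω) (T : ℝ)
    (U : (Ω → ℝ) → (Ω → ℝ) → Ω → ℝ) (V2 : (Ω → ℝ) → Ω → ℝ) : Prop :=
  ∀ ρ : Ω → ℝ, ∀ hρ : ρ ∈ ST 𝓕 T,
    StronglyMeasurable[hρ.1.measurableSpace] (V2 ρ) ∧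
    (∀ τ ∈ ST 𝓕 T, (∀ᵐ ω ∂μ, ρ ω ≤ τ ω) →
      μ[U ρ τ | hρ.1.measurableSpace] ≤ᵐ[μ] V2 ρ) ∧
    (∀ Z : Ω → ℝ,
      (∀ τ ∈ ST 𝓕 T, (∀ᵐ ω ∂μ, ρ ω ≤ τ ω) →
        μ[U ρ τ | hρ.1.measurableSpace] ≤ᵐ[μ] Z) →
      V2 ρ ≤ᵐ[μ] Z)

/-- `inf_{r ∈ strat} sup_{τ ∈ 𝒯} E[U(r(τ),τ)]`. -/
noncomputable def upperGame (𝓕 : Filtration ℝ m) (μ : Measure Ω) (T : ℝ)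
    (strat : ((Ω → ℝ) → Ω → ℝ) → Prop) (U : (Ω → ℝ) → (Ω → ℝ) → Ω → ℝ) : ℝ :=
  sInf {x | ∃ r, strat r ∧
    x = sSup {y | ∃ τ ∈ ST 𝓕 T, y = ∫ ω, U (r τ) τ ω ∂μ}}

/-- `sup_{r ∈ strat} inf_{ρ ∈ 𝒯} E[U(ρ, r(ρ))]`. -/
noncomputable def lowerGame (𝓕 : Filtration ℝ m) (μ : Measure Ω) (T : ℝ)
    (strat : ((Ω → ℝ) → Ω → ℝ) → Prop) (U : (Ω → ℝ) → (Ω → ℝ) → Ω → ℝ) : ℝ :=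
  sSup {x | ∃ r, strat r ∧
    x = sInf {y | ∃ ρ ∈ ST 𝓕 T, y = ∫ ω, U ρ (r ρ) ω ∂μ}}

/-- `V̅ := inf_ρ sup_τ E[V¹(τ)1_{τ≤ρ} + V²(ρ)1_{τ>ρ}]`. -/
noncomputable def upperV (𝓕 : Filtration ℝ m) (μ : Measure Ω) (T : ℝ)
    (V1 V2 : (Ω → ℝ) → Ω → ℝ) : ℝ :=
  sInf {x | ∃ ρ ∈ ST 𝓕 T,
    x = sSup {y | ∃ τ ∈ ST 𝓕 T,
      y = ∫ ω, (if τ ω ≤ ρ ω then V1 τ ω else V2 ρ ω) ∂μ}}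

/-- `V̲ := sup_τ inf_ρ E[V¹(τ)1_{τ≤ρ} + V²(ρ)1_{τ>ρ}]`. -/
noncomputable def lowerV (𝓕 : Filtration ℝ m) (μ : Measure Ω) (T : ℝ)
    (V1 V2 : (Ω → ℝ) → Ω → ℝ) : ℝ :=
  sSup {x | ∃ τ ∈ ST 𝓕 T,
    x = sInf {y | ∃ ρ ∈ ST 𝓕 T,
      y = ∫ ω, (if τ ω ≤ ρ ω then V1 τ ω else V2 ρ ω) ∂μ}}


set_option linter.unusedSectionVars false
set_option linter.unusedVariables false
set_option maxHeartbeats 1000000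

section AuxProofs

variable {μ : Measure Ω} [IsProbabilityMeasure μ] {𝓕 : Filtration ℝ m} {T : ℝ}
  {U : (Ω → ℝ) → (Ω → ℝ) → Ω → ℝ} {V1 V2 : (Ω → ℝ) → Ω → ℝ}

lemma const_mem_ST {c : ℝ} (h0 : 0 ≤ c) (hc : c ≤ T) : (fun _ : Ω => c) ∈ ST 𝓕 T :=
  ⟨isStoppingTime_const 𝓕 c, fun _ => ⟨h0, hc⟩⟩

lemma max_mem_ST {a b : Ω → ℝ} (ha : a ∈ ST 𝓕 T) (hb : b ∈ ST 𝓕 T) :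
    (fun ω => max (a ω) (b ω)) ∈ ST 𝓕 T :=
  ⟨ha.1.max hb.1, fun ω =>
    ⟨le_trans (ha.2 ω).1 (le_max_left _ _), max_le (ha.2 ω).2 (hb.2 ω).2⟩⟩

lemma piecewise_mem_ST {ρ : Ω → WithTop ℝ} {a b : Ω → ℝ} {s : Set Ω} [DecidablePred (· ∈ s)]
    (hρ : IsStoppingTime 𝓕 ρ) (ha : a ∈ ST 𝓕 T) (hb : b ∈ ST 𝓕 T)
    (hs : MeasurableSet[hρ.measurableSpace] s)
    (hρa : ∀ ω, ρ ω ≤ a ω) (hρb : ∀ ω, ρ ω ≤ b ω) :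
    s.piecewise a b ∈ ST 𝓕 T := by
  refine ⟨fun n => ?_, fun ω => ?_⟩
  · show MeasurableSet[𝓕 n] {ω | ((s.piecewise a b ω : ℝ) : WithTop ℝ) ≤ (n : WithTop ℝ)}
    have h1 : {ω | ((s.piecewise a b ω : ℝ) : WithTop ℝ) ≤ (n : WithTop ℝ)} =
        s ∩ {ω | (a ω : WithTop ℝ) ≤ n} ∪ sᶜ ∩ {ω | (b ω : WithTop ℝ) ≤ n} := by
      ext ω; by_cases hx : ω ∈ s <;> simp [Set.piecewise, hx]
    rw [h1]
    have hsn : MeasurableSet[𝓕 n] (s ∩ {ω | ρ ω ≤ n}) := (hρ.measurableSet s).1 hs |>.2 n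
    have hcn : MeasurableSet[𝓕 n] (sᶜ ∩ {ω | ρ ω ≤ n}) :=
      (hρ.measurableSet sᶜ).1 (MeasurableSet.compl hs) |>.2 n
    have e1 : s ∩ {ω | (a ω : WithTop ℝ) ≤ n} = s ∩ {ω | ρ ω ≤ n} ∩ {ω | (a ω : WithTop ℝ) ≤ n} := by
      ext ω
      simp only [Set.mem_inter_iff, Set.mem_setOf_eq]
      exact ⟨fun h => ⟨⟨h.1, le_trans (hρa ω) h.2⟩, h.2⟩, fun h => ⟨h.1.1, h.2⟩⟩
    have e2 : sᶜ ∩ {ω | (b ω : WithTop ℝ) ≤ n} = sᶜ ∩ {ω | ρ ω ≤ n} ∩ {ω | (b ω : WithTop ℝ) ≤ n} := by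
      ext ω
      simp only [Set.mem_inter_iff, Set.mem_setOf_eq]
      exact ⟨fun h => ⟨⟨h.1, le_trans (hρb ω) h.2⟩, h.2⟩, fun h => ⟨h.1.1, h.2⟩⟩
    rw [e1, e2]
    exact (hsn.inter (ha.1 n)).union (hcn.inter (hb.1 n))
  · by_cases hx : ω ∈ s
    · simpa [Set.piecewise, hx] using ha.2 ω
    · simpa [Set.piecewise, hx] using hb.2 ω

lemma integrable_of_bound {f : Ω → ℝ} (hf : AEStronglyMeasurable f μ) {C : ℝ}
    (h : ∀ᵐ ω ∂μ, |f ω| ≤ C) : Integrable f μ :=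
  ⟨hf, HasFiniteIntegral.of_bounded (C := C) (by simpa [Real.norm_eq_abs] using h)⟩

lemma abs_integral_le {f : Ω → ℝ} {C : ℝ}
    (h : ∀ᵐ ω ∂μ, |f ω| ≤ C) : |∫ ω, f ω ∂μ| ≤ C := by
  have := norm_integral_le_of_norm_le_const (μ := μ) (f := f) (C := C)
    (h.mono fun ω hω => by rwa [Real.norm_eq_abs])
  simpa [Real.norm_eq_abs, measure_univ] using this

lemma measurable_U (hU : Biadmissible 𝓕 μ T U) {ρ τ : Ω → ℝ}
    (hρ : ρ ∈ ST 𝓕 T) (hτ : τ ∈ ST 𝓕 T) : Measurable (U ρ τ) :=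
  (hU.2.1 ρ τ hρ hτ).mono (hρ.1.max hτ.1).measurableSpace_le le_rfl

lemma integrable_U (hU : Biadmissible 𝓕 μ T U) {ρ τ : Ω → ℝ}
    (hρ : ρ ∈ ST 𝓕 T) (hτ : τ ∈ ST 𝓕 T) : Integrable (U ρ τ) μ := by
  obtain ⟨C, hC⟩ := hU.1
  exact integrable_of_bound (measurable_U hU hρ hτ).aestronglyMeasurable (hC ρ hρ τ hτ)

lemma abs_condexp_le {m' : MeasurableSpace Ω} (hm : m' ≤ m) {f : Ω → ℝ}
    (hf : Integrable f μ) {C : ℝ} (h : ∀ᵐ ω ∂μ, |f ω| ≤ C) :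
    ∀ᵐ ω ∂μ, |(μ[f|m']) ω| ≤ C := by
  have h1 : μ[f|m'] ≤ᵐ[μ] μ[(fun _ => C)|m'] :=
    condExp_mono hf (integrable_const C) (h.mono fun ω hω => (abs_le.1 hω).2)
  have h2 : μ[(fun _ => -C)|m'] ≤ᵐ[μ] μ[f|m'] :=
    condExp_mono (integrable_const _) hf (h.mono fun ω hω => (abs_le.1 hω).1)
  have hc1 : μ[(fun _ : Ω => C)|m'] = fun _ => C := condExp_const hm C
  have hc2 : μ[(fun _ : Ω => -C)|m'] = fun _ => -C := condExp_const hm (-C)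
  filter_upwards [h1, h2] with ω hω1 hω2
  rw [hc1] at hω1; rw [hc2] at hω2
  exact abs_le.2 ⟨hω2, hω1⟩

lemma my_le_of_forall_pos_le_add {a b : ℝ} (h : ∀ ε : ℝ, 0 < ε → a ≤ b + ε) : a ≤ b := by
  by_contra hc
  push_neg at hc
  have := h ((a - b) / 2) (by linarith)
  linarith


lemma abs_V1_le (hU : Biadmissible 𝓕 μ T U) (hV1 : IsV1 𝓕 μ T U V1) {C : ℝ}
    (hC : ∀ ρ ∈ ST 𝓕 T, ∀ τ ∈ ST 𝓕 T, ∀ᵐ ω ∂μ, |U ρ τ ω| ≤ C)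
    (hT : 0 ≤ T) {τ : Ω → ℝ} (hτ : τ ∈ ST 𝓕 T) : ∀ᵐ ω ∂μ, |V1 τ ω| ≤ C := by
  have hTbar : (fun _ : Ω => T) ∈ ST 𝓕 T := const_mem_ST hT le_rfl
  obtain ⟨hmeas, hle, hglb⟩ := hV1 τ hτ
  have hup : V1 τ ≤ᵐ[μ] μ[U (fun _ => T) τ|hτ.1.measurableSpace] :=
    hle _ hTbar (Eventually.of_forall fun ω => (hτ.2 ω).2)
  have hlow : (fun _ : Ω => -C) ≤ᵐ[μ] V1 τ := by
    refine hglb _ fun ρ hρ hτρ => ?_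
    have H := abs_condexp_le (μ := μ) hτ.1.measurableSpace_le
      (integrable_U hU hρ hτ) (hC ρ hρ τ hτ)
    filter_upwards [H] with ω hω
    exact (abs_le.1 hω).1
  have hbd := abs_condexp_le (μ := μ) hτ.1.measurableSpace_le
    (integrable_U hU hTbar hτ) (hC _ hTbar τ hτ)
  filter_upwards [hup, hlow, hbd] with ω h1 h2 h3
  exact abs_le.2 ⟨h2, le_trans h1 (abs_le.1 h3).2⟩

lemma abs_V2_le (hU : Biadmissible 𝓕 μ T U) (hV2 : IsV2 𝓕 μ T U V2) {C : ℝ}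
    (hC : ∀ ρ ∈ ST 𝓕 T, ∀ τ ∈ ST 𝓕 T, ∀ᵐ ω ∂μ, |U ρ τ ω| ≤ C)
    (hT : 0 ≤ T) {ρ : Ω → ℝ} (hρ : ρ ∈ ST 𝓕 T) : ∀ᵐ ω ∂μ, |V2 ρ ω| ≤ C := by
  have hTbar : (fun _ : Ω => T) ∈ ST 𝓕 T := const_mem_ST hT le_rfl
  obtain ⟨hmeas, hge, hlub⟩ := hV2 ρ hρ
  have hlow : μ[U ρ (fun _ => T)|hρ.1.measurableSpace] ≤ᵐ[μ] V2 ρ :=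
    hge _ hTbar (Eventually.of_forall fun ω => (hρ.2 ω).2)
  have hup : V2 ρ ≤ᵐ[μ] (fun _ : Ω => C) := by
    refine hlub _ fun τ hτ hρτ => ?_
    have H := abs_condexp_le (μ := μ) hρ.1.measurableSpace_le
      (integrable_U hU hρ hτ) (hC ρ hρ τ hτ)
    filter_upwards [H] with ω hω
    exact (abs_le.1 hω).2
  have hbd := abs_condexp_le (μ := μ) hρ.1.measurableSpace_le
    (integrable_U hU hρ hTbar) (hC ρ hρ _ hTbar)
  filter_upwards [hlow, hup, hbd] with ω h1 h2 h3
  exact abs_le.2 ⟨le_trans (abs_le.1 h3).1 h1, h2⟩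

lemma integrable_V1 (hU : Biadmissible 𝓕 μ T U) (hV1 : IsV1 𝓕 μ T U V1) {C : ℝ}
    (hC : ∀ ρ ∈ ST 𝓕 T, ∀ τ ∈ ST 𝓕 T, ∀ᵐ ω ∂μ, |U ρ τ ω| ≤ C)
    (hT : 0 ≤ T) {τ : Ω → ℝ} (hτ : τ ∈ ST 𝓕 T) : Integrable (V1 τ) μ :=
  integrable_of_bound (((hV1 τ hτ).1.mono hτ.1.measurableSpace_le).aestronglyMeasurable)
    (abs_V1_le hU hV1 hC hT hτ)

lemma integrable_V2 (hU : Biadmissible 𝓕 μ T U) (hV2 : IsV2 𝓕 μ T U V2) {C : ℝ}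
    (hC : ∀ ρ ∈ ST 𝓕 T, ∀ τ ∈ ST 𝓕 T, ∀ᵐ ω ∂μ, |U ρ τ ω| ≤ C)
    (hT : 0 ≤ T) {ρ : Ω → ℝ} (hρ : ρ ∈ ST 𝓕 T) : Integrable (V2 ρ) μ :=
  integrable_of_bound (((hV2 ρ hρ).1.mono hρ.1.measurableSpace_le).aestronglyMeasurable)
    (abs_V2_le hU hV2 hC hT hρ)

lemma condexp_paste (hU : Biadmissible 𝓕 μ T U) {ρ a b : Ω → ℝ}
    (hρ : ρ ∈ ST 𝓕 T) (ha : a ∈ ST 𝓕 T) (hb : b ∈ ST 𝓕 T)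
    (hρa : ∀ ω, ρ ω ≤ a ω) (hρb : ∀ ω, ρ ω ≤ b ω) :
    ∃ c, (c ∈ ST 𝓕 T ∧ ∀ ω, ρ ω ≤ c ω) ∧
      μ[U ρ a|hρ.1.measurableSpace] ≤ᵐ[μ] μ[U ρ c|hρ.1.measurableSpace] ∧
      μ[U ρ b|hρ.1.measurableSpace] ≤ᵐ[μ] μ[U ρ c|hρ.1.measurableSpace] := by
  classical
  set m' := hρ.1.measurableSpace with hm'def
  set A := μ[U ρ a|m'] with hAdef
  set B := μ[U ρ b|m'] with hBdef
  have hAm : StronglyMeasurable[m'] A := stronglyMeasurable_condExp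
  have hBm : StronglyMeasurable[m'] B := stronglyMeasurable_condExp
  set s : Set Ω := {ω | B ω ≤ A ω} with hsdef
  have hs : MeasurableSet[m'] s := measurableSet_le hBm.measurable hAm.measurable
  set c := s.piecewise a b with hcdef
  have hc : c ∈ ST 𝓕 T := piecewise_mem_ST hρ.1 ha hb hs
    (fun ω => WithTop.coe_le_coe.2 (hρa ω)) (fun ω => WithTop.coe_le_coe.2 (hρb ω))
  have hρc : ∀ ω, ρ ω ≤ c ω := fun ω => by
    by_cases hx : ω ∈ s
    · simpa [hcdef, Set.piecewise, hx] using hρa ω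
    · simpa [hcdef, Set.piecewise, hx] using hρb ω
  have hca : Set.indicator s (U ρ c) =ᵐ[μ] Set.indicator s (U ρ a) := by
    filter_upwards [hU.2.2 ρ hρ ρ hρ c hc a ha] with ω hω
    by_cases hx : ω ∈ s
    · rw [Set.indicator_of_mem hx, Set.indicator_of_mem hx]
      exact hω rfl (Set.piecewise_eq_of_mem _ _ _ hx)
    · rw [Set.indicator_of_notMem hx, Set.indicator_of_notMem hx]
  have hcb : Set.indicator sᶜ (U ρ c) =ᵐ[μ] Set.indicator sᶜ (U ρ b) := by
    filter_upwards [hU.2.2 ρ hρ ρ hρ c hc b hb] with ω hω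
    by_cases hx : ω ∈ sᶜ
    · rw [Set.indicator_of_mem hx, Set.indicator_of_mem hx]
      exact hω rfl (Set.piecewise_eq_of_notMem _ _ _ hx)
    · rw [Set.indicator_of_notMem hx, Set.indicator_of_notMem hx]
  have h1 : Set.indicator s (μ[U ρ c|m']) =ᵐ[μ] Set.indicator s A := by
    calc Set.indicator s (μ[U ρ c|m'])
        =ᵐ[μ] μ[Set.indicator s (U ρ c)|m'] := (condExp_indicator (integrable_U hU hρ hc) hs).symm
      _ =ᵐ[μ] μ[Set.indicator s (U ρ a)|m'] := condExp_congr_ae hca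
      _ =ᵐ[μ] Set.indicator s A := condExp_indicator (integrable_U hU hρ ha) hs
  have h2 : Set.indicator sᶜ (μ[U ρ c|m']) =ᵐ[μ] Set.indicator sᶜ B := by
    calc Set.indicator sᶜ (μ[U ρ c|m'])
        =ᵐ[μ] μ[Set.indicator sᶜ (U ρ c)|m'] :=
          (condExp_indicator (integrable_U hU hρ hc) hs.compl).symm
      _ =ᵐ[μ] μ[Set.indicator sᶜ (U ρ b)|m'] := condExp_congr_ae hcb
      _ =ᵐ[μ] Set.indicator sᶜ B := condExp_indicator (integrable_U hU hρ hb) hs.compl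
  refine ⟨c, ⟨hc, hρc⟩, ?_, ?_⟩
  · filter_upwards [h1, h2] with ω e1 e2
    by_cases hx : ω ∈ s
    · have : (μ[U ρ c|m']) ω = A ω := by
        simpa [Set.indicator_of_mem hx] using e1
      rw [this]
    · have : (μ[U ρ c|m']) ω = B ω := by
        simpa [Set.indicator_of_mem (Set.mem_compl hx)] using e2
      rw [this]
      have hx' : ¬ B ω ≤ A ω := hx
      exact le_of_lt (lt_of_not_ge hx')
  · filter_upwards [h1, h2] with ω e1 e2
    by_cases hx : ω ∈ s
    · have : (μ[U ρ c|m']) ω = A ω := by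
        simpa [Set.indicator_of_mem hx] using e1
      rw [this]
      exact hx
    · have : (μ[U ρ c|m']) ω = B ω := by
        simpa [Set.indicator_of_mem (Set.mem_compl hx)] using e2
      rw [this]


lemma exists_V2_near_opt (hU : Biadmissible 𝓕 μ T U) {C : ℝ}
    (hC : ∀ ρ ∈ ST 𝓕 T, ∀ τ ∈ ST 𝓕 T, ∀ᵐ ω ∂μ, |U ρ τ ω| ≤ C)
    (hV2 : IsV2 𝓕 μ T U V2) (hT : 0 ≤ T) {ρ : Ω → ℝ} (hρ : ρ ∈ ST 𝓕 T)
    {ε : ℝ} (hε : 0 < ε) :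
    ∃ σ, (σ ∈ ST 𝓕 T ∧ ∀ ω, ρ ω ≤ σ ω) ∧
      ∫ ω, V2 ρ ω ∂μ ≤ (∫ ω, U ρ σ ω ∂μ) + ε := by
  classical
  set m' := hρ.1.measurableSpace with hm'def
  have hm' : m' ≤ m := hρ.1.measurableSpace_le
  have hC0 : 0 ≤ C := by
    obtain ⟨ω, hω⟩ := (hC ρ hρ ρ hρ).exists
    exact le_trans (abs_nonneg _) hω
  have hTbarG : (fun _ : Ω => T) ∈ ST 𝓕 T ∧ ∀ ω, ρ ω ≤ (fun _ : Ω => T) ω :=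
    ⟨const_mem_ST hT le_rfl, fun ω => (hρ.2 ω).2⟩
  set K : Set ℝ :=
    Set.range (fun σ : {σ : Ω → ℝ // σ ∈ ST 𝓕 T ∧ ∀ ω, ρ ω ≤ σ ω} =>
      ∫ ω, U ρ σ.1 ω ∂μ) with hKdef
  have hKne : K.Nonempty := ⟨_, ⟨⟨_, hTbarG⟩, rfl⟩⟩
  have hKbdd : BddAbove K := by
    refine ⟨C, ?_⟩
    rintro x ⟨σ, rfl⟩
    exact (abs_le.1 (abs_integral_le (hC ρ hρ _ σ.2.1))).2
  have hKmem : ∀ σ : {σ : Ω → ℝ // σ ∈ ST 𝓕 T ∧ ∀ ω, ρ ω ≤ σ ω},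
      (∫ ω, U ρ σ.1 ω ∂μ) ∈ K := fun σ => ⟨σ, rfl⟩
  set s := sSup K with hsdef
  suffices hfin : ∫ ω, V2 ρ ω ∂μ ≤ s by
    obtain ⟨x, hxK, hx⟩ := exists_lt_of_lt_csSup hKne (show s - ε < s by linarith)
    obtain ⟨σ, rfl⟩ := hxK
    exact ⟨σ.1, σ.2, by linarith⟩
  -- choose near optimal sequence
  have hseq : ∀ n : ℕ, ∃ σ : {σ : Ω → ℝ // σ ∈ ST 𝓕 T ∧ ∀ ω, ρ ω ≤ σ ω},
      s - 1/((n : ℝ)+1) < ∫ ω, U ρ σ.1 ω ∂μ := by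
    intro n
    have hpos : (0 : ℝ) < 1/((n : ℝ)+1) := by positivity
    obtain ⟨x, hxK, hx⟩ := exists_lt_of_lt_csSup hKne
      (show s - 1/((n : ℝ)+1) < s by linarith)
    obtain ⟨σ, rfl⟩ := hxK
    exact ⟨σ, hx⟩
  choose σs hσsint using hseq
  -- pasting on the subtype
  have hpaste : ∀ a b : {σ : Ω → ℝ // σ ∈ ST 𝓕 T ∧ ∀ ω, ρ ω ≤ σ ω},
      ∃ c : {σ : Ω → ℝ // σ ∈ ST 𝓕 T ∧ ∀ ω, ρ ω ≤ σ ω},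
      μ[U ρ a.1|m'] ≤ᵐ[μ] μ[U ρ c.1|m'] ∧
      μ[U ρ b.1|m'] ≤ᵐ[μ] μ[U ρ c.1|m'] := by
    rintro ⟨a, haST, haρ⟩ ⟨b, hbST, hbρ⟩
    obtain ⟨c, hc, h1, h2⟩ := condexp_paste hU hρ haST hbST haρ hbρ
    exact ⟨⟨c, hc⟩, h1, h2⟩
  choose pf hpf1 hpf2 using hpaste
  let ch : ℕ → {σ : Ω → ℝ // σ ∈ ST 𝓕 T ∧ ∀ ω, ρ ω ≤ σ ω} := fun n =>
    Nat.rec (σs 0) (fun k ck => pf ck (σs (k+1))) n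
  set A : ℕ → Ω → ℝ := fun n => μ[U ρ (ch n).1|m'] with hAdef
  have hmono : ∀ n, A n ≤ᵐ[μ] A (n+1) := fun n => hpf1 _ _
  have hdom : ∀ n, μ[U ρ (σs n).1|m'] ≤ᵐ[μ] A n := by
    intro n
    cases n with
    | zero => exact EventuallyLE.refl _ _
    | succ k => exact hpf2 _ _
  have hAint : ∀ n, Integrable (A n) μ := fun n => integrable_condExp
  have hAbd : ∀ n, ∀ᵐ ω ∂μ, |A n ω| ≤ C := fun n =>
    abs_condexp_le hm' (integrable_U hU hρ (ch n).2.1) (hC ρ hρ _ (ch n).2.1)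
  have hintA_eq : ∀ σ : {σ : Ω → ℝ // σ ∈ ST 𝓕 T ∧ ∀ ω, ρ ω ≤ σ ω},
      ∫ ω, (μ[U ρ σ.1|m']) ω ∂μ = ∫ ω, U ρ σ.1 ω ∂μ :=
    fun σ => integral_condExp hm'
  have hAs : ∀ n, ∫ ω, A n ω ∂μ ≤ s := fun n => by
    rw [hAdef]
    rw [hintA_eq (ch n)]
    exact le_csSup hKbdd (hKmem (ch n))
  have hAgt : ∀ n : ℕ, s - 1/((n : ℝ)+1) < ∫ ω, A n ω ∂μ := by
    intro n
    refine lt_of_lt_of_le (hσsint n) ?_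
    rw [← hintA_eq (σs n)]
    exact integral_mono_ae integrable_condExp (hAint n) (hdom n)
  -- truncation
  set A' : ℕ → Ω → ℝ := fun n ω => max (-C) (min C (A n ω)) with hA'def
  have hA'eq : ∀ n, A' n =ᵐ[μ] A n := by
    intro n
    filter_upwards [hAbd n] with ω hω
    rw [hA'def]
    simp only
    rw [min_eq_right (abs_le.1 hω).2, max_eq_right (abs_le.1 hω).1]
  have hA'bd : ∀ n ω, -C ≤ A' n ω ∧ A' n ω ≤ C := fun n ω =>
    ⟨le_max_left _ _, max_le (by linarith) (min_le_left _ _)⟩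
  have hAmeas : ∀ n, Measurable[m] (A n) := fun n =>
    (stronglyMeasurable_condExp.mono hm').measurable
  have hA'meas : ∀ n, Measurable[m] (A' n) := fun n =>
    measurable_const.max (measurable_const.min (hAmeas n))
  -- running maxima
  let B : ℕ → Ω → ℝ := fun n => Nat.rec (A' 0)
    (fun k Bk => fun ω => max (Bk ω) (A' (k+1) ω)) n
  have hBsucc : ∀ n ω, B (n+1) ω = max (B n ω) (A' (n+1) ω) := fun n ω => rfl
  have hBmono : ∀ n ω, B n ω ≤ B (n+1) ω := fun n ω => le_max_left _ _
  have hBbd : ∀ n ω, -C ≤ B n ω ∧ B n ω ≤ C := by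
    intro n
    induction n with
    | zero => exact fun ω => hA'bd 0 ω
    | succ k ih =>
      intro ω
      rw [hBsucc]
      exact ⟨le_trans (ih ω).1 (le_max_left _ _), max_le (ih ω).2 (hA'bd (k+1) ω).2⟩
  have hBeq : ∀ n, B n =ᵐ[μ] A n := by
    intro n
    induction n with
    | zero => exact hA'eq 0
    | succ k ih =>
      filter_upwards [ih, hA'eq (k+1), hmono k] with ω h1 h2 h3
      rw [hBsucc, h1, h2]
      exact max_eq_right h3
  have hBmeas : ∀ n, Measurable[m] (B n) := by
    intro n
    induction n with
    | zero => exact hA'meas 0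
    | succ k ih => exact ih.max (hA'meas (k+1))
  set Z : Ω → ℝ := fun ω => ⨆ n, B n ω with hZdef
  have hbddZ : ∀ ω, BddAbove (Set.range fun n => B n ω) := fun ω => by
    refine ⟨C, ?_⟩
    rintro x ⟨n, rfl⟩
    exact (hBbd n ω).2
  have hBZ : ∀ ω, Tendsto (fun n => B n ω) atTop (nhds (Z ω)) := fun ω =>
    tendsto_atTop_ciSup (monotone_nat_of_le_succ fun n => hBmono n ω) (hbddZ ω)
  have hBleZ : ∀ n ω, B n ω ≤ Z ω := fun n ω => le_ciSup (hbddZ ω) n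
  have hZbd : ∀ ω, -C ≤ Z ω ∧ Z ω ≤ C := fun ω =>
    ⟨le_trans (hBbd 0 ω).1 (hBleZ 0 ω), ciSup_le fun n => (hBbd n ω).2⟩
  have hZmeas : AEStronglyMeasurable[m] Z μ :=
    aestronglyMeasurable_of_tendsto_ae atTop
      (fun n => (hBmeas n).aestronglyMeasurable) (Eventually.of_forall hBZ)
  have hZint : Integrable Z μ :=
    integrable_of_bound hZmeas (C := C)
      (Eventually.of_forall fun ω => abs_le.2 ⟨(hZbd ω).1, (hZbd ω).2⟩)
  have hZs : ∫ ω, Z ω ∂μ ≤ s := by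
    have ht := tendsto_integral_of_dominated_convergence (μ := μ) (fun _ => C)
      (fun n => (hBmeas n).aestronglyMeasurable) (integrable_const C)
      (fun n => Eventually.of_forall fun ω => by
        rw [Real.norm_eq_abs]; exact abs_le.2 (hBbd n ω))
      (Eventually.of_forall hBZ)
    refine le_of_tendsto ht (Eventually.of_forall fun n => ?_)
    calc ∫ ω, B n ω ∂μ = ∫ ω, A n ω ∂μ := integral_congr_ae (hBeq n)
      _ ≤ s := hAs n
  -- domination of the whole family by Z
  have hZdom : ∀ σ : {σ : Ω → ℝ // σ ∈ ST 𝓕 T ∧ ∀ ω, ρ ω ≤ σ ω},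
      μ[U ρ σ.1|m'] ≤ᵐ[μ] Z := by
    intro σ
    set D := μ[U ρ σ.1|m'] with hDdef
    have hDint : Integrable D μ := integrable_condExp
    have hMint : Integrable (fun ω => max (D ω) (Z ω)) μ := hDint.sup hZint
    have key : ∀ n : ℕ, ∫ ω, (max (D ω) (Z ω) - Z ω) ∂μ ≤ 1/((n : ℝ)+1) := by
      intro n
      have h1 := hpf1 (ch n) σ
      have h2 := hpf2 (ch n) σ
      have hmaxle : (fun ω => max (D ω) (A n ω)) ≤ᵐ[μ]
          μ[U ρ (pf (ch n) σ).1|m'] := by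
        filter_upwards [h1, h2] with ω e1 e2
        exact max_le e2 e1
      have hMnint : Integrable (fun ω => max (D ω) (A n ω)) μ := hDint.sup (hAint n)
      have hint1 : ∫ ω, max (D ω) (A n ω) ∂μ ≤ s := by
        refine le_trans (integral_mono_ae hMnint integrable_condExp hmaxle) ?_
        rw [hintA_eq (pf (ch n) σ)]
        exact le_csSup hKbdd (hKmem (pf (ch n) σ))
      have hAZ : A n ≤ᵐ[μ] Z := by
        filter_upwards [hBeq n] with ω hω
        rw [← hω]
        exact hBleZ n ω
      have hpt : (fun ω => max (D ω) (Z ω) - Z ω) ≤ᵐ[μ]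
          fun ω => max (D ω) (A n ω) - A n ω := by
        filter_upwards [hAZ] with ω hω
        rcases le_total (D ω) (A n ω) with h | h
        · rw [max_eq_right h, max_eq_right (h.trans hω)]
          linarith
        · rw [max_eq_left h]
          rcases le_total (D ω) (Z ω) with h' | h'
          · rw [max_eq_right h']
            linarith
          · rw [max_eq_left h']
            linarith
      have hsub1 : Integrable (fun ω => max (D ω) (Z ω) - Z ω) μ := hMint.sub hZint
      have hsub2 : Integrable (fun ω => max (D ω) (A n ω) - A n ω) μ :=
        hMnint.sub (hAint n)
      calc ∫ ω, (max (D ω) (Z ω) - Z ω) ∂μ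
          ≤ ∫ ω, (max (D ω) (A n ω) - A n ω) ∂μ := integral_mono_ae hsub1 hsub2 hpt
        _ = (∫ ω, max (D ω) (A n ω) ∂μ) - ∫ ω, A n ω ∂μ := integral_sub hMnint (hAint n)
        _ ≤ 1/((n : ℝ)+1) := by
            have h3 := hAgt n
            linarith [hint1]
    have hnonneg : ∀ ω, (0 : ℝ) ≤ max (D ω) (Z ω) - Z ω := fun ω => by
      have := le_max_right (D ω) (Z ω)
      linarith
    have hgint : Integrable (fun ω => max (D ω) (Z ω) - Z ω) μ := hMint.sub hZint
    have hzero : ∫ ω, (max (D ω) (Z ω) - Z ω) ∂μ = 0 := by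
      refine le_antisymm ?_ (integral_nonneg hnonneg)
      by_contra hcon
      push_neg at hcon
      obtain ⟨n, hn⟩ := exists_nat_one_div_lt hcon
      exact absurd (key n) (not_le.2 hn)
    have hae := (integral_eq_zero_iff_of_nonneg hnonneg hgint).1 hzero
    filter_upwards [hae] with ω hω
    have hmz : max (D ω) (Z ω) - Z ω = 0 := hω
    have hle : D ω ≤ max (D ω) (Z ω) := le_max_left _ _
    linarith
  -- V2 is dominated by Z
  have hV2Z : V2 ρ ≤ᵐ[μ] Z := by
    refine (hV2 ρ hρ).2.2 Z fun τ' hτ' hρτ' => ?_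
    have hmaxST : (fun ω => max (τ' ω) (ρ ω)) ∈ ST 𝓕 T := max_mem_ST hτ' hρ
    have he : U ρ (fun ω => max (τ' ω) (ρ ω)) =ᵐ[μ] U ρ τ' := by
      filter_upwards [hU.2.2 ρ hρ ρ hρ _ hmaxST τ' hτ', hρτ'] with ω hadm hle
      exact hadm rfl (max_eq_left hle)
    calc μ[U ρ τ'|m'] =ᵐ[μ] μ[U ρ (fun ω => max (τ' ω) (ρ ω))|m'] :=
          condExp_congr_ae he.symm
      _ ≤ᵐ[μ] Z := hZdom ⟨_, hmaxST, fun ω => le_max_right _ _⟩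
  calc ∫ ω, V2 ρ ω ∂μ ≤ ∫ ω, Z ω ∂μ :=
        integral_mono_ae (integrable_V2 hU hV2 hC hT hρ) hZint hV2Z
    _ ≤ s := hZs


lemma key_ineq (hU : Biadmissible 𝓕 μ T U) {C : ℝ}
    (hC : ∀ ρ ∈ ST 𝓕 T, ∀ τ ∈ ST 𝓕 T, ∀ᵐ ω ∂μ, |U ρ τ ω| ≤ C)
    (hV1 : IsV1 𝓕 μ T U V1) (hV2 : IsV2 𝓕 μ T U V2) (hT : 0 ≤ T)
    {r : (Ω → ℝ) → Ω → ℝ} (hr : TypeI 𝓕 μ T r) {τ : Ω → ℝ} (hτ : τ ∈ ST 𝓕 T)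
    {ε : ℝ} (hε : 0 < ε) :
    ∃ τ' ∈ ST 𝓕 T,
      (∫ ω, (if τ ω ≤ r (fun _ => T) ω then V1 τ ω else V2 (r (fun _ => T)) ω) ∂μ)
        ≤ (∫ ω, U (r τ') τ' ω ∂μ) + ε := by
  classical
  have hTbar : (fun _ : Ω => T) ∈ ST 𝓕 T := const_mem_ST hT le_rfl
  set ρh := r (fun _ : Ω => T) with hρhdef
  have hρh : ρh ∈ ST 𝓕 T := hr.1 _ hTbar
  obtain ⟨σ, ⟨hσ, hρσ⟩, hσopt⟩ := exists_V2_near_opt hU hC hV2 hT hρh hε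
  set s : Set Ω := {ω | τ ω ≤ ρh ω} with hsdef
  have hs_τ : MeasurableSet[hτ.1.measurableSpace] s :=
    by simpa only [WithTop.coe_le_coe] using IsStoppingTime.measurableSet_le_stopping_time hτ.1 hρh.1
  have hs_ρ : MeasurableSet[hρh.1.measurableSpace] s :=
    by simpa only [WithTop.coe_le_coe] using IsStoppingTime.measurableSet_stopping_time_le hτ.1 hρh.1
  have hs_m : MeasurableSet s := hτ.1.measurableSpace_le _ hs_τ
  set τ' := s.piecewise τ σ with hτ'def
  have hτ'ST : τ' ∈ ST 𝓕 T := by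
    refine piecewise_mem_ST (hτ.1.min hρh.1) hτ hσ ?_
      (fun ω => min_le_left _ _) (fun ω => le_trans (min_le_right _ _) (WithTop.coe_le_coe.2 (hρσ ω)))
    exact (IsStoppingTime.measurableSet_min_iff hτ.1 hρh.1 s).2 ⟨hs_τ, hs_ρ⟩
  have hrτ' : r τ' ∈ ST 𝓕 T := hr.1 _ hτ'ST
  set ρ2 : Ω → ℝ := fun ω => max (r τ' ω) (τ ω) with hρ2def
  have hρ2 : ρ2 ∈ ST 𝓕 T := max_mem_ST hrτ' hτ
  have hdich := hr.2 τ' hτ'ST (fun _ => T) hTbar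
  have hae1 : ∀ᵐ ω ∂μ, ω ∈ s → (r τ' ω = ρ2 ω ∧ τ' ω = τ ω) := by
    filter_upwards [hdich] with ω hω hωs
    have hωs' : τ ω ≤ ρh ω := hωs
    have hττ' : τ' ω = τ ω := Set.piecewise_eq_of_mem _ _ _ hωs
    have hmin : min (τ' ω) ((fun _ : Ω => T) ω) = τ' ω := min_eq_left (hτ'ST.2 ω).2
    have hrge : τ ω ≤ r τ' ω := by
      rcases hω with ⟨heq, hle⟩ | hlt
      · rw [heq]
        exact hωs'
      · rw [hmin, hττ'] at hlt
        exact le_of_lt (lt_of_lt_of_le hlt (min_le_left _ _))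
    refine ⟨?_, hττ'⟩
    rw [hρ2def]
    exact (max_eq_left hrge).symm
  have hae2 : ∀ᵐ ω ∂μ, ω ∉ s → (r τ' ω = ρh ω ∧ τ' ω = σ ω) := by
    filter_upwards [hdich] with ω hω hωs
    have hτ'σ : τ' ω = σ ω := Set.piecewise_eq_of_notMem _ _ _ hωs
    refine ⟨?_, hτ'σ⟩
    rcases hω with ⟨heq, _⟩ | hlt
    · exact heq
    · exfalso
      have hmin : min (τ' ω) ((fun _ : Ω => T) ω) = τ' ω := min_eq_left (hτ'ST.2 ω).2
      rw [hmin] at hlt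
      have hlt2 : τ' ω < ρh ω := lt_of_lt_of_le hlt (min_le_right _ _)
      rw [hτ'σ] at hlt2
      exact absurd (hρσ ω) (not_le.2 hlt2)
  have adm1 := hU.2.2 (r τ') hrτ' ρ2 hρ2 τ' hτ'ST τ hτ
  have adm2 := hU.2.2 (r τ') hrτ' ρh hρh τ' hτ'ST σ hσ
  have hint_r : Integrable (U (r τ') τ') μ := integrable_U hU hrτ' hτ'ST
  have hint1 : Integrable (U ρ2 τ) μ := integrable_U hU hρ2 hτ
  have hint2 : Integrable (U ρh σ) μ := integrable_U hU hρh hσ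
  have hintV1 : Integrable (V1 τ) μ := integrable_V1 hU hV1 hC hT hτ
  have hintV2 : Integrable (V2 ρh) μ := integrable_V2 hU hV2 hC hT hρh
  set f : Ω → ℝ := fun ω => if τ ω ≤ ρh ω then V1 τ ω else V2 ρh ω with hfdef
  have hfmeas : Measurable[m] f := by
    refine Measurable.ite ?_ ?_ ?_
    · exact hs_m
    · exact ((hV1 τ hτ).1.mono hτ.1.measurableSpace_le).measurable
    · exact ((hV2 ρh hρh).1.mono hρh.1.measurableSpace_le).measurable
  have hfint : Integrable f μ := by
    refine integrable_of_bound hfmeas.aestronglyMeasurable (C := C) ?_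
    filter_upwards [abs_V1_le hU hV1 hC hT hτ, abs_V2_le hU hV2 hC hT hρh] with ω h1 h2
    rw [hfdef]
    by_cases h : τ ω ≤ ρh ω
    · simpa [h] using h1
    · simpa [h] using h2
  -- decompose
  have hsplitU : (∫ ω in s, U (r τ') τ' ω ∂μ) + ∫ ω in sᶜ, U (r τ') τ' ω ∂μ
      = ∫ ω, U (r τ') τ' ω ∂μ := integral_add_compl hs_m hint_r
  have hsplitf : (∫ ω in s, f ω ∂μ) + ∫ ω in sᶜ, f ω ∂μ = ∫ ω, f ω ∂μ :=
    integral_add_compl hs_m hfint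
  have hfs : ∫ ω in s, f ω ∂μ = ∫ ω in s, V1 τ ω ∂μ :=
    setIntegral_congr_fun hs_m (fun ω hω => if_pos hω)
  have hfsc : ∫ ω in sᶜ, f ω ∂μ = ∫ ω in sᶜ, V2 ρh ω ∂μ :=
    setIntegral_congr_fun hs_m.compl (fun ω hω => if_neg hω)
  have h1 : ∫ ω in s, V1 τ ω ∂μ ≤ ∫ ω in s, U (r τ') τ' ω ∂μ := by
    have e1 : ∫ ω in s, U (r τ') τ' ω ∂μ = ∫ ω in s, U ρ2 τ ω ∂μ := by
      refine integral_congr_ae ?_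
      rw [EventuallyEq, ae_restrict_iff' hs_m]
      filter_upwards [hae1, adm1] with ω h hadm hωs
      exact hadm (h hωs).1 (h hωs).2
    rw [e1, ← setIntegral_condExp hτ.1.measurableSpace_le hint1 hs_τ]
    refine setIntegral_mono_ae hintV1.integrableOn integrable_condExp.integrableOn ?_
    exact (hV1 τ hτ).2.1 ρ2 hρ2 (Eventually.of_forall fun ω => le_max_right _ _)
  have h2 : ∫ ω in sᶜ, V2 ρh ω ∂μ ≤ (∫ ω in sᶜ, U (r τ') τ' ω ∂μ) + ε := by
    have e2 : ∫ ω in sᶜ, U (r τ') τ' ω ∂μ = ∫ ω in sᶜ, U ρh σ ω ∂μ := by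
      refine integral_congr_ae ?_
      rw [EventuallyEq, ae_restrict_iff' hs_m.compl]
      filter_upwards [hae2, adm2] with ω h hadm hωs
      exact hadm (h hωs).1 (h hωs).2
    have e3 : ∫ ω in sᶜ, U ρh σ ω ∂μ
        = ∫ ω in sᶜ, (μ[U ρh σ|hρh.1.measurableSpace]) ω ∂μ :=
      (setIntegral_condExp hρh.1.measurableSpace_le hint2 hs_ρ.compl).symm
    have hg_nonneg : 0 ≤ᵐ[μ] fun ω => V2 ρh ω - (μ[U ρh σ|hρh.1.measurableSpace]) ω := by
      filter_upwards [(hV2 ρh hρh).2.1 σ hσ (Eventually.of_forall hρσ)] with ω h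
      simp only [Pi.zero_apply]
      linarith
    have hg_int : Integrable (fun ω => V2 ρh ω - (μ[U ρh σ|hρh.1.measurableSpace]) ω) μ :=
      hintV2.sub integrable_condExp
    have hg_small : ∫ ω, (V2 ρh ω - (μ[U ρh σ|hρh.1.measurableSpace]) ω) ∂μ ≤ ε := by
      rw [integral_sub hintV2 integrable_condExp,
        integral_condExp hρh.1.measurableSpace_le]
      linarith
    have hset := setIntegral_le_integral (s := sᶜ) hg_int hg_nonneg
    have hsub : ∫ ω in sᶜ, (V2 ρh ω - (μ[U ρh σ|hρh.1.measurableSpace]) ω) ∂μ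
        = (∫ ω in sᶜ, V2 ρh ω ∂μ) - ∫ ω in sᶜ, (μ[U ρh σ|hρh.1.measurableSpace]) ω ∂μ :=
      integral_sub hintV2.integrableOn integrable_condExp.integrableOn
    rw [e2, e3]
    have := le_trans hset hg_small
    rw [hsub] at this
    linarith
  refine ⟨τ', hτ'ST, ?_⟩
  have hgoal : ∫ ω, f ω ∂μ ≤ (∫ ω, U (r τ') τ' ω ∂μ) + ε := by
    rw [← hsplitU, ← hsplitf, hfs, hfsc]
    linarith
  exact hgoal


theorem assemble (μ : Measure Ω) [IsProbabilityMeasure μ]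
    (𝓕 : Filtration ℝ m) (T : ℝ) (hT : 0 < T)
    (U : (Ω → ℝ) → (Ω → ℝ) → Ω → ℝ) (hU : Biadmissible 𝓕 μ T U)
    (V1 V2 : (Ω → ℝ) → Ω → ℝ)
    {C : ℝ} (hC : ∀ ρ ∈ ST 𝓕 T, ∀ τ ∈ ST 𝓕 T, ∀ᵐ ω ∂μ, |U ρ τ ω| ≤ C)
    (habsV1 : ∀ τ, τ ∈ ST 𝓕 T → ∀ᵐ ω ∂μ, |V1 τ ω| ≤ C)
    (habsV2 : ∀ ρ, ρ ∈ ST 𝓕 T → ∀ᵐ ω ∂μ, |V2 ρ ω| ≤ C)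
    (hkey : ∀ r : (Ω → ℝ) → Ω → ℝ, TypeI 𝓕 μ T r → ∀ τ ∈ ST 𝓕 T, ∀ ε : ℝ, 0 < ε →
      ∃ τ' ∈ ST 𝓕 T,
        (∫ ω, (if τ ω ≤ r (fun _ => T) ω then V1 τ ω else V2 (r (fun _ => T)) ω) ∂μ)
          ≤ (∫ ω, U (r τ') τ' ω ∂μ) + ε) :
    lowerV 𝓕 μ T V1 V2 ≤ upperGame 𝓕 μ T (TypeI 𝓕 μ T) U := by
  classical
  have hT0 : (0 : ℝ) ≤ T := hT.le
  have hzero : (fun _ : Ω => (0 : ℝ)) ∈ ST 𝓕 T := const_mem_ST le_rfl hT0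
  have hTbar : (fun _ : Ω => T) ∈ ST 𝓕 T := const_mem_ST hT0 le_rfl
  rw [lowerV, upperGame]
  refine le_csInf ?_ ?_
  · -- the constant strategy r σ = T̄ is of Type I
    refine ⟨_, fun _ => fun _ : Ω => T, ⟨fun σ _ => hTbar, ?_⟩, rfl⟩
    intro σ₁ h1 σ₂ h2
    refine Eventually.of_forall fun ω => ?_
    have hle : min (σ₁ ω) (σ₂ ω) ≤ T := le_trans (min_le_left _ _) (h1.2 ω).2
    rcases lt_or_eq_of_le hle with h | h
    · right
      simpa using h
    · left
      exact ⟨rfl, le_of_eq h.symm⟩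
  · rintro x ⟨r, hr, rfl⟩
    refine csSup_le ⟨_, (fun _ : Ω => (0 : ℝ)), hzero, rfl⟩ ?_
    rintro y ⟨τ, hτ, rfl⟩
    refine my_le_of_forall_pos_le_add fun ε hε => ?_
    obtain ⟨τ', hτ', hkey'⟩ := hkey r hr τ hτ ε hε
    have hρhST : r (fun _ : Ω => T) ∈ ST 𝓕 T := hr.1 _ hTbar
    have hmem1 : (∫ ω, (if τ ω ≤ r (fun _ : Ω => T) ω then V1 τ ω
        else V2 (r (fun _ : Ω => T)) ω) ∂μ) ∈
        {y | ∃ ρ ∈ ST 𝓕 T, y = ∫ ω, (if τ ω ≤ ρ ω then V1 τ ω else V2 ρ ω) ∂μ} :=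
      ⟨r (fun _ : Ω => T), hρhST, rfl⟩
    have hbdd1 : BddBelow {y | ∃ ρ ∈ ST 𝓕 T,
        y = ∫ ω, (if τ ω ≤ ρ ω then V1 τ ω else V2 ρ ω) ∂μ} := by
      refine ⟨-C, ?_⟩
      rintro z ⟨ρ, hρ, rfl⟩
      have hbd : ∀ᵐ ω ∂μ, |(if τ ω ≤ ρ ω then V1 τ ω else V2 ρ ω)| ≤ C := by
        filter_upwards [habsV1 τ hτ, habsV2 ρ hρ] with ω hb1 hb2
        by_cases h : τ ω ≤ ρ ω
        · simpa [h] using hb1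
        · simpa [h] using hb2
      exact (abs_le.1 (abs_integral_le hbd)).1
    refine le_trans (csInf_le hbdd1 hmem1) ?_
    refine le_trans hkey' ?_
    have hmem2 : (∫ ω, U (r τ') τ' ω ∂μ) ∈
        {y | ∃ τ₂ ∈ ST 𝓕 T, y = ∫ ω, U (r τ₂) τ₂ ω ∂μ} := ⟨τ', hτ', rfl⟩
    have hbdd2 : BddAbove {y | ∃ τ₂ ∈ ST 𝓕 T, y = ∫ ω, U (r τ₂) τ₂ ω ∂μ} := by
      refine ⟨C, ?_⟩
      rintro z ⟨τ₂, hτ₂, rfl⟩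
      exact (abs_le.1 (abs_integral_le (hC _ (hr.1 _ hτ₂) _ hτ₂))).2
    linarith [le_csSup hbdd2 hmem2]


end AuxProofs

/-- If the biadmissible family `U` is URCE, then `A̅ ≥ V̲`. -/
theorem stmt_16 {Ω : Type*} {m : MeasurableSpace Ω} (μ : Measure Ω) [IsProbabilityMeasure μ]
    (𝓕 : Filtration ℝ m) (T : ℝ) (hT : 0 < T) (huc : UsualConditions 𝓕 μ T)
    (U : (Ω → ℝ) → (Ω → ℝ) → Ω → ℝ) (hU : Biadmissible 𝓕 μ T U) (hU' : URCE 𝓕 μ T U)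
    (V1 V2 : (Ω → ℝ) → Ω → ℝ) (hV1 : IsV1 𝓕 μ T U V1) (hV2 : IsV2 𝓕 μ T U V2) :
    lowerV 𝓕 μ T V1 V2 ≤ upperGame 𝓕 μ T (TypeI 𝓕 μ T) U := by
  obtain ⟨C, hC⟩ := hU.1
  exact assemble μ 𝓕 T hT U hU V1 V2 hC
    (fun τ hτ => abs_V1_le hU hV1 hC hT.le hτ)
    (fun ρ hρ => abs_V2_le hU hV2 hC hT.le hρ)
    (fun r hr τ hτ ε hε => key_ineq hU hC hV1 hV2 hT.le hr hτ hε)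

end OSG
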